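/- arXiv:2404.00319 — 2 statements merged into one kernel-verified Lean document; each statement's English description precedes it below -/
import Mathlib

section
/- Let Y be a real-valued random variable whose CDF G : ℝ → ℝ is continuous and strictly increasing with 0 < G(y) < 1 for all y, let c > 0 with t := 1 - G(c) + G(-c) > 0, and let G^c(y) := P(Y ≤ y and |Y| > c)/t be the truncated CDF with generalized inverse (G^c)⁻¹(p) := inf{ y : G^c(y) ≥ p }. Then for any β₁, β₂ ∈ (0,1) with β₁ + β₂ = α < 1, the conditional acceptance region has exact conditional level: P( (G^c)⁻¹(β₁) < Y ≤ (G^c)⁻¹(1 - β₂) | |Y| > c ) = 1 - α. -/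
open MeasureTheory ProbabilityTheory

/-- If `f` is continuous monotone, attains the value `p`, and is somewhere `< p`,
then `f (sInf {y | p ≤ f y}) = p`. -/
lemma sInf_level_aux {f : ℝ → ℝ} (hf : Continuous f) (hmono : Monotone f) {p b : ℝ}
    (ha : ∃ a, f a = p) (hb : f b < p) :
    f (sInf {y | p ≤ f y}) = p := by
  obtain ⟨a, ha⟩ := ha
  have hS : IsClosed {y : ℝ | p ≤ f y} := isClosed_le continuous_const hf
  have hne : {y : ℝ | p ≤ f y}.Nonempty := ⟨a, ha.ge⟩
  have hbdd : BddBelow {y : ℝ | p ≤ f y} := by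
    refine ⟨b, fun y hy => ?_⟩
    by_contra h
    exact absurd (hy.trans (hmono (le_of_not_ge h))) (not_le.mpr hb)
  set q := sInf {y : ℝ | p ≤ f y} with hq
  have hqmem : q ∈ {y : ℝ | p ≤ f y} := hS.csInf_mem hne hbdd
  have h1 : p ≤ f q := hqmem
  have h2 : f q ≤ p := by
    have hev : ∀ᶠ y in nhdsWithin q (Set.Iio q), f y ≤ p := by
      filter_upwards [self_mem_nhdsWithin] with y hy
      by_contra h
      exact absurd (csInf_le hbdd (le_of_not_ge h)) (not_le.mpr hy)
    have htd : Filter.Tendsto f (nhdsWithin q (Set.Iio q)) (nhds (f q)) :=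
      (hf.tendsto q).mono_left nhdsWithin_le_nhds
    exact le_of_tendsto htd hev
  linarith

/-- Exact conditional level of the conditional acceptance region: if `Y` has continuous
strictly increasing CDF `G` with full support, `c > 0`, `t = P(|Y| > c) > 0`, `Gc` is the
truncated CDF and `(Gc)⁻¹` its generalized inverse, then for `β₁ + β₂ = α < 1`,
`P((Gc)⁻¹(β₁) < Y ≤ (Gc)⁻¹(1 - β₂) | |Y| > c) = 1 - α`. -/
theorem conditional_acceptance_region_exact_level
    {Ω : Type*} [MeasurableSpace Ω] (μ : Measure Ω) [IsProbabilityMeasure μ]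
    (Y : Ω → ℝ) (hYm : Measurable Y)
    (G : ℝ → ℝ) (hG : ∀ y, G y = (μ {ω | Y ω ≤ y}).toReal)
    (hGcont : Continuous G) (hGmono : StrictMono G)
    (hG0 : ∀ y, 0 < G y) (hG1 : ∀ y, G y < 1)
    (c : ℝ) (hc : 0 < c)
    (t : ℝ) (ht : t = 1 - G c + G (-c)) (htpos : 0 < t)
    (Gc : ℝ → ℝ) (hGc : ∀ y, Gc y = (μ {ω | Y ω ≤ y ∧ c < |Y ω|}).toReal / t)
    (α β₁ β₂ : ℝ) (hβ₁ : 0 < β₁) (hβ₂ : 0 < β₂) (hαdef : β₁ + β₂ = α) (hα : α < 1) :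
    ((ProbabilityTheory.cond μ {ω | c < |Y ω|})
        {ω | sInf {y : ℝ | β₁ ≤ Gc y} < Y ω ∧ Y ω ≤ sInf {y : ℝ | 1 - β₂ ≤ Gc y}}).toReal
      = 1 - α := by
  -- basic measurability and finiteness
  have hms : ∀ y : ℝ, MeasurableSet {ω | Y ω ≤ y} := fun y => hYm measurableSet_Iic
  have hsm : MeasurableSet {ω | c < |Y ω|} :=
    measurableSet_lt measurable_const hYm.abs
  have hBm : ∀ y : ℝ, MeasurableSet {ω | Y ω ≤ y ∧ c < |Y ω|} := by
    intro y
    have : {ω | Y ω ≤ y ∧ c < |Y ω|} = {ω | Y ω ≤ y} ∩ {ω | c < |Y ω|} := rfl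
    rw [this]; exact (hms y).inter hsm
  have hFeq : ∀ y : ℝ, μ {ω | Y ω ≤ y} = ENNReal.ofReal (G y) := by
    intro y
    rw [hG y, ENNReal.ofReal_toReal (measure_ne_top μ _)]
  -- no atoms
  have hatom : ∀ a : ℝ, μ {ω | Y ω = a} = 0 := by
    intro a
    have hkey : ∀ y : ℝ, y < a → (μ {ω | Y ω = a}).toReal ≤ G a - G y := by
      intro y hy
      have hsub : {ω | Y ω = a} ⊆ {ω | Y ω ≤ a} \ {ω | Y ω ≤ y} := by
        intro ω hω
        simp only [Set.mem_setOf_eq] at hω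
        exact ⟨le_of_eq hω, by simp only [Set.mem_setOf_eq]; rw [hω]; exact not_le.mpr hy⟩
      have hsub2 : {ω | Y ω ≤ y} ⊆ {ω | Y ω ≤ a} := fun ω hω => le_trans hω hy.le
      have hdiff : μ ({ω | Y ω ≤ a} \ {ω | Y ω ≤ y}) = μ {ω | Y ω ≤ a} - μ {ω | Y ω ≤ y} :=
        measure_diff hsub2 (hms y).nullMeasurableSet (measure_ne_top μ _)
      have h1 : (μ {ω | Y ω = a}).toReal ≤ (μ ({ω | Y ω ≤ a} \ {ω | Y ω ≤ y})).toReal :=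
        ENNReal.toReal_mono (measure_ne_top μ _) (measure_mono hsub)
      rw [hdiff, ENNReal.toReal_sub_of_le (measure_mono hsub2)
        (measure_ne_top μ _), ← hG a, ← hG y] at h1
      exact h1
    have htd : Filter.Tendsto (fun y => G a - G y) (nhdsWithin a (Set.Iio a)) (nhds 0) := by
      have : Filter.Tendsto (fun y => G a - G y) (nhds a) (nhds (G a - G a)) :=
        tendsto_const_nhds.sub (hGcont.tendsto a)
      rw [sub_self] at this
      exact this.mono_left nhdsWithin_le_nhds
    have hle : (μ {ω | Y ω = a}).toReal ≤ 0 := by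
      refine ge_of_tendsto htd ?_
      filter_upwards [self_mem_nhdsWithin] with y hy
      exact hkey y hy
    have h0 : (μ {ω | Y ω = a}).toReal = 0 := le_antisymm hle ENNReal.toReal_nonneg
    rwa [ENNReal.toReal_eq_zero_iff, or_iff_left (measure_ne_top μ _)] at h0
  -- measure of strict sublevels
  have hIio : ∀ a : ℝ, μ {ω | Y ω < a} = ENNReal.ofReal (G a) := by
    intro a
    have hset : {ω | Y ω < a} = {ω | Y ω ≤ a} \ {ω | Y ω = a} := by
      ext ω; simp only [Set.mem_setOf_eq, Set.mem_diff, lt_iff_le_and_ne]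
    rw [hset, measure_diff_null (hatom a), hFeq a]
  -- measure of the conditioning set
  have hμs : μ {ω | c < |Y ω|} = ENNReal.ofReal t := by
    have hset : {ω | c < |Y ω|} = {ω | Y ω < -c} ∪ {ω | c < Y ω} := by
      ext ω
      simp only [Set.mem_setOf_eq, Set.mem_union, lt_abs, lt_neg]
      tauto
    have hdisj : Disjoint {ω | Y ω < -c} {ω | c < Y ω} := by
      rw [Set.disjoint_left]
      intro ω h1 h2
      simp only [Set.mem_setOf_eq] at h1 h2
      linarith
    have hmgt : MeasurableSet {ω | c < Y ω} := measurableSet_lt measurable_const hYm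
    have hcompl : μ {ω | c < Y ω} = 1 - ENNReal.ofReal (G c) := by
      have : {ω | c < Y ω} = {ω | Y ω ≤ c}ᶜ := by
        ext ω; simp only [Set.mem_setOf_eq, Set.mem_compl_iff, not_le]
      rw [this, measure_compl (hms c) (measure_ne_top μ _), hFeq c, measure_univ]
    rw [hset, measure_union hdisj hmgt, hIio (-c), hcompl]
    rw [show (1 : ENNReal) = ENNReal.ofReal 1 from ENNReal.ofReal_one.symm,
      ← ENNReal.ofReal_sub 1 (hG0 c).le,
      ← ENNReal.ofReal_add (hG0 (-c)).le (by linarith [hG1 c] : (0:ℝ) ≤ 1 - G c)]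
    congr 1
    rw [ht]; ring
  -- the truncated measure
  have hH : ∀ y : ℝ, μ {ω | Y ω ≤ y ∧ c < |Y ω|} = ENNReal.ofReal (t * Gc y) := by
    intro y
    have h1 : (μ {ω | Y ω ≤ y ∧ c < |Y ω|}).toReal = t * Gc y := by
      rw [hGc y]; field_simp
    rw [← h1, ENNReal.ofReal_toReal (measure_ne_top μ _)]
  have hHval : ∀ y : ℝ, t * Gc y = (μ {ω | Y ω ≤ y ∧ c < |Y ω|}).toReal := by
    intro y; rw [hGc y]; field_simp
  have hHnn : ∀ y : ℝ, 0 ≤ t * Gc y := by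
    intro y; rw [hHval y]; exact ENNReal.toReal_nonneg
  -- monotonicity of Gc
  have hBmono : ∀ a y : ℝ, a ≤ y →
      {ω | Y ω ≤ a ∧ c < |Y ω|} ⊆ {ω | Y ω ≤ y ∧ c < |Y ω|} := by
    intro a y hay ω hω
    exact ⟨hω.1.trans hay, hω.2⟩
  have hkmono : Monotone (fun y => t * Gc y) := by
    intro a y hay
    simp only
    rw [hHval a, hHval y]
    exact ENNReal.toReal_mono (measure_ne_top μ _) (measure_mono (hBmono a y hay))
  have hGcmono : Monotone Gc := by
    intro a y hay
    have := hkmono hay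
    simp only at this
    exact le_of_mul_le_mul_left (by linarith) htpos
  -- increments of the truncated measure are controlled by increments of G
  have hdiffle : ∀ a y : ℝ, a ≤ y → t * Gc y - t * Gc a ≤ G y - G a := by
    intro a y hay
    have hd1 : μ ({ω | Y ω ≤ y ∧ c < |Y ω|} \ {ω | Y ω ≤ a ∧ c < |Y ω|})
        = μ {ω | Y ω ≤ y ∧ c < |Y ω|} - μ {ω | Y ω ≤ a ∧ c < |Y ω|} :=
      measure_diff (hBmono a y hay) (hBm a).nullMeasurableSet (measure_ne_top μ _)
    have hsub2 : {ω | Y ω ≤ a} ⊆ {ω | Y ω ≤ y} := fun ω hω => le_trans hω hay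
    have hd2 : μ ({ω | Y ω ≤ y} \ {ω | Y ω ≤ a})
        = μ {ω | Y ω ≤ y} - μ {ω | Y ω ≤ a} :=
      measure_diff hsub2 (hms a).nullMeasurableSet (measure_ne_top μ _)
    have hsub : {ω | Y ω ≤ y ∧ c < |Y ω|} \ {ω | Y ω ≤ a ∧ c < |Y ω|}
        ⊆ {ω | Y ω ≤ y} \ {ω | Y ω ≤ a} := by
      rintro ω ⟨⟨h1, h2⟩, h3⟩
      exact ⟨h1, fun h => h3 ⟨h, h2⟩⟩
    have := ENNReal.toReal_mono (by rw [hd2]; exact (tsub_le_self.trans_lt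
      (measure_lt_top μ _)).ne) (measure_mono hsub)
    rw [hd1, hd2, ENNReal.toReal_sub_of_le (measure_mono (hBmono a y hay)) (measure_ne_top μ _),
      ENNReal.toReal_sub_of_le (measure_mono hsub2)
        (measure_ne_top μ _), ← hG y, ← hG a, ← hHval y, ← hHval a] at this
    exact this
  -- continuity of Gc
  have hkcont : Continuous (fun y => t * Gc y) := by
    rw [continuous_iff_continuousAt]
    intro a
    have habs : Filter.Tendsto (fun y => |G y - G a|) (nhds a) (nhds 0) := by
      have h0 : Filter.Tendsto (fun y => G y - G a) (nhds a) (nhds (G a - G a)) :=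
        (hGcont.tendsto a).sub tendsto_const_nhds
      rw [sub_self] at h0
      simpa using h0.abs
    have htd1 : Filter.Tendsto (fun y => t * Gc a - |G y - G a|) (nhds a)
        (nhds (t * Gc a)) := by
      have : Filter.Tendsto (fun y => t * Gc a - |G y - G a|) (nhds a)
          (nhds (t * Gc a - 0)) := Filter.Tendsto.sub tendsto_const_nhds habs
      rwa [sub_zero] at this
    have htd2 : Filter.Tendsto (fun y => t * Gc a + |G y - G a|) (nhds a)
        (nhds (t * Gc a)) := by
      have : Filter.Tendsto (fun y => t * Gc a + |G y - G a|) (nhds a)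
          (nhds (t * Gc a + 0)) := Filter.Tendsto.add tendsto_const_nhds habs
      rwa [add_zero] at this
    have hlow : (fun y => t * Gc a - |G y - G a|) ≤ fun y => t * Gc y := by
      intro y
      rcases le_total a y with h | h
      · have h1 := hkmono h
        have h2 : 0 ≤ |G y - G a| := abs_nonneg _
        simp only at h1 ⊢
        linarith
      · have h1 := hdiffle y a h
        have h2 : G a - G y ≤ |G y - G a| := by
          rw [abs_sub_comm]; exact le_abs_self _
        simp only
        linarith
    have hhigh : (fun y => t * Gc y) ≤ fun y => t * Gc a + |G y - G a| := by
      intro y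
      rcases le_total a y with h | h
      · have h1 := hdiffle a y h
        have h2 : G y - G a ≤ |G y - G a| := le_abs_self _
        simp only
        linarith
      · have h1 := hkmono h
        have h2 : 0 ≤ |G y - G a| := abs_nonneg _
        simp only at h1 ⊢
        linarith
    exact tendsto_of_tendsto_of_tendsto_of_le_of_le htd1 htd2 hlow hhigh
  have hGccont : Continuous Gc := by
    have : Gc = fun y => (t * Gc y) / t := by
      funext y; field_simp
    rw [this]
    exact hkcont.div_const t
  -- bounds on the truncated CDF
  have hub : ∀ y : ℝ, t * Gc y ≤ G y := by
    intro y
    rw [hHval y, hG y]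
    exact ENNReal.toReal_mono (measure_ne_top μ _) (measure_mono (fun ω hω => hω.1))
  have hlb : ∀ y : ℝ, t - (1 - G y) ≤ t * Gc y := by
    intro y
    have hsub : {ω | c < |Y ω|} \ {ω | Y ω ≤ y ∧ c < |Y ω|} ⊆ {ω | Y ω ≤ y}ᶜ := by
      rintro ω ⟨h1, h2⟩ h3
      exact h2 ⟨h3, h1⟩
    have hd : μ ({ω | c < |Y ω|} \ {ω | Y ω ≤ y ∧ c < |Y ω|})
        = μ {ω | c < |Y ω|} - μ {ω | Y ω ≤ y ∧ c < |Y ω|} :=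
      measure_diff (fun ω hω => hω.2) (hBm y).nullMeasurableSet (measure_ne_top μ _)
    have hcompl : μ {ω | Y ω ≤ y}ᶜ = 1 - ENNReal.ofReal (G y) := by
      rw [measure_compl (hms y) (measure_ne_top μ _), hFeq y, measure_univ]
    have hmono : (μ ({ω | c < |Y ω|} \ {ω | Y ω ≤ y ∧ c < |Y ω|})).toReal
        ≤ ((1 : ENNReal) - ENNReal.ofReal (G y)).toReal := by
      refine ENNReal.toReal_mono ?_ ?_
      · rw [← hcompl]; exact measure_ne_top μ _
      · rw [← hcompl]; exact measure_mono hsub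
    rw [hd, ENNReal.toReal_sub_of_le (measure_mono (fun ω hω => hω.2)) (measure_ne_top μ _),
      hμs, ENNReal.toReal_ofReal htpos.le, ← hHval y] at hmono
    have h1 : ((1 : ENNReal) - ENNReal.ofReal (G y)).toReal = 1 - G y := by
      rw [show (1 : ENNReal) = ENNReal.ofReal 1 from ENNReal.ofReal_one.symm,
        ← ENNReal.ofReal_sub 1 (hG0 y).le, ENNReal.toReal_ofReal (by linarith [hG1 y])]
    rw [h1] at hmono
    linarith
  -- G tends to 1 at +∞ (via the pushforward measure)
  set ν : Measure ℝ := μ.map Y with hν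
  have hνIic : ∀ y : ℝ, ν (Set.Iic y) = μ {ω | Y ω ≤ y} := by
    intro y
    rw [hν, Measure.map_apply hYm measurableSet_Iic]
    rfl
  have hGtop : Filter.Tendsto G Filter.atTop (nhds 1) := by
    have h1 : Filter.Tendsto (fun x => ν (Set.Iic x)) Filter.atTop (nhds (ν Set.univ)) :=
      tendsto_measure_Iic_atTop ν
    have hν1 : ν Set.univ = 1 := by
      rw [hν, Measure.map_apply hYm MeasurableSet.univ, Set.preimage_univ, measure_univ]
    rw [hν1] at h1
    have h2 : Filter.Tendsto (fun x => (ν (Set.Iic x)).toReal) Filter.atTop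
        (nhds (1 : ENNReal).toReal) :=
      (ENNReal.tendsto_toReal ENNReal.one_ne_top).comp h1
    rw [ENNReal.toReal_one] at h2
    refine h2.congr fun x => ?_
    rw [hνIic x, ← hG x]
  -- existence of a point where Gc is below β₁
  have hIciBot : Filter.Tendsto (fun x => (ν (Set.Ici x)).toReal) Filter.atBot (nhds 1) := by
    have h1 : Filter.Tendsto (fun x => ν (Set.Ici x)) Filter.atBot (nhds (ν Set.univ)) :=
      tendsto_measure_Ici_atBot ν
    have hν1 : ν Set.univ = 1 := by
      rw [hν, Measure.map_apply hYm MeasurableSet.univ, Set.preimage_univ, measure_univ]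
    rw [hν1] at h1
    have h2 := (ENNReal.tendsto_toReal ENNReal.one_ne_top).comp h1
    rwa [ENNReal.toReal_one] at h2
  have hlowpt : ∀ p : ℝ, 0 < p → ∃ b : ℝ, Gc b < p := by
    intro p hp
    have hev : ∀ᶠ x in Filter.atBot, 1 - t * p < (ν (Set.Ici x)).toReal := by
      have := hIciBot.eventually_const_lt (show 1 - t * p < 1 by nlinarith)
      exact this
    obtain ⟨x₀, hx₀⟩ := hev.exists
    refine ⟨x₀ - 1, ?_⟩
    -- G (x₀ - 1) + ν (Ici x₀) ≤ 1
    have hdisj : Disjoint {ω | Y ω ≤ x₀ - 1} (Y ⁻¹' Set.Ici x₀) := by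
      rw [Set.disjoint_left]
      intro ω h1 h2
      simp only [Set.mem_setOf_eq] at h1
      simp only [Set.mem_preimage, Set.mem_Ici] at h2
      linarith
    have hνIci : ν (Set.Ici x₀) = μ (Y ⁻¹' Set.Ici x₀) := by
      rw [hν, Measure.map_apply hYm measurableSet_Ici]
    have hsum : μ {ω | Y ω ≤ x₀ - 1} + μ (Y ⁻¹' Set.Ici x₀) ≤ 1 := by
      rw [← measure_union hdisj (hYm measurableSet_Ici)]
      exact (measure_mono (Set.subset_univ _)).trans_eq (measure_univ)
    have hsum' : G (x₀ - 1) + (ν (Set.Ici x₀)).toReal ≤ 1 := by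
      have := ENNReal.toReal_mono ENNReal.one_ne_top hsum
      rw [ENNReal.toReal_add (measure_ne_top μ _) (measure_ne_top μ _), ENNReal.toReal_one]
        at this
      rw [hG (x₀ - 1), hνIci]
      exact this
    have hGlt : G (x₀ - 1) < t * p := by linarith
    have := (hub (x₀ - 1)).trans_lt hGlt
    exact lt_of_mul_lt_mul_left (by linarith) htpos.le
  -- existence of a point where Gc is at least p, for p < 1
  have hhighpt : ∀ p : ℝ, p < 1 → ∃ a : ℝ, p ≤ Gc a := by
    intro p hp
    have hev : ∀ᶠ x in Filter.atTop, 1 - t * (1 - p) < G x :=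
      hGtop.eventually_const_lt (by nlinarith)
    obtain ⟨x₀, hx₀⟩ := hev.exists
    refine ⟨x₀, ?_⟩
    have := hlb x₀
    have h1 : t * p ≤ t * Gc x₀ := by linarith
    exact le_of_mul_le_mul_left h1 htpos
  -- the two quantiles
  have hβ₁lt1 : β₁ < 1 := by linarith
  have h1β₂pos : 0 < 1 - β₂ := by linarith
  have hβ₁le : β₁ ≤ 1 - β₂ := by linarith
  obtain ⟨b₁, hb₁⟩ := hlowpt β₁ hβ₁
  obtain ⟨a₂, ha₂⟩ := hhighpt (1 - β₂) (by linarith)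
  have hex₁ : ∃ a : ℝ, Gc a = β₁ := by
    have hmem : β₁ ∈ Set.Icc (Gc b₁) (Gc a₂) := ⟨hb₁.le, hβ₁le.trans ha₂⟩
    exact intermediate_value_univ b₁ a₂ hGccont hmem
  have hex₂ : ∃ a : ℝ, Gc a = 1 - β₂ := by
    have hmem : (1 - β₂) ∈ Set.Icc (Gc b₁) (Gc a₂) := ⟨(hb₁.trans_le hβ₁le).le, ha₂⟩
    exact intermediate_value_univ b₁ a₂ hGccont hmem
  set q₁ := sInf {y : ℝ | β₁ ≤ Gc y} with hq₁
  set q₂ := sInf {y : ℝ | 1 - β₂ ≤ Gc y} with hq₂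
  have hGcq₁ : Gc q₁ = β₁ := sInf_level_aux hGccont hGcmono hex₁ hb₁
  have hGcq₂ : Gc q₂ = 1 - β₂ :=
    sInf_level_aux hGccont hGcmono hex₂ (hb₁.trans_le hβ₁le)
  -- q₁ ≤ q₂
  have hbdd₁ : BddBelow {y : ℝ | β₁ ≤ Gc y} := by
    refine ⟨b₁, fun y hy => ?_⟩
    by_contra h
    exact absurd (hy.trans (hGcmono (le_of_not_ge h))) (not_le.mpr hb₁)
  have hne₂ : {y : ℝ | 1 - β₂ ≤ Gc y}.Nonempty := ⟨a₂, ha₂⟩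
  have hq₁₂ : q₁ ≤ q₂ :=
    csInf_le_csInf hbdd₁ hne₂ (fun y hy => le_trans hβ₁le hy)
  -- final computation
  rw [cond_apply hsm]
  have hset : {ω | c < |Y ω|} ∩ {ω | q₁ < Y ω ∧ Y ω ≤ q₂}
      = {ω | Y ω ≤ q₂ ∧ c < |Y ω|} \ {ω | Y ω ≤ q₁ ∧ c < |Y ω|} := by
    ext ω
    simp only [Set.mem_inter_iff, Set.mem_setOf_eq, Set.mem_diff]
    constructor
    · rintro ⟨hs, h1, h2⟩
      exact ⟨⟨h2, hs⟩, fun h => absurd h.1 (not_le.mpr h1)⟩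
    · rintro ⟨⟨h2, hs⟩, h⟩
      refine ⟨hs, ?_, h2⟩
      by_contra hle
      exact h ⟨le_of_not_gt hle, hs⟩
  rw [hset]
  have hmeasdiff : μ ({ω | Y ω ≤ q₂ ∧ c < |Y ω|} \ {ω | Y ω ≤ q₁ ∧ c < |Y ω|})
      = ENNReal.ofReal (t * (1 - α)) := by
    rw [measure_diff (hBmono q₁ q₂ hq₁₂) (hBm q₁).nullMeasurableSet (measure_ne_top μ _),
      hH q₁, hH q₂, hGcq₁, hGcq₂,
      ← ENNReal.ofReal_sub _ (mul_nonneg htpos.le hβ₁.le)]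
    congr 1
    rw [← hαdef]
    ring
  rw [hmeasdiff, hμs, ENNReal.toReal_mul, ENNReal.toReal_inv,
    ENNReal.toReal_ofReal htpos.le,
    ENNReal.toReal_ofReal (by nlinarith : (0:ℝ) ≤ t * (1 - α))]
  field_simp
end

section
/- Let F : ℝ → ℝ be a continuous, strictly increasing cumulative distribution function with 0 < F(y) < 1 for all y, symmetric about 0 (F(-y) = 1 - F(y)), let α ∈ (0,1), let β₋ ∈ [α/2, α] with α - β₋ > 0, and write q(p) := F⁻¹(1-p), Q₂ := q(α/2), Q_B := q(β₋), Q_A := q(α - β₋). Define the positive-preferring confidence interval I_pp(y) ⊆ ℝ by: I_pp(y) = (y - Q₂, y + Q₂) if y < -Q₂ - Q_A; (y - Q₂, y + Q_A) if -Q₂ - Q_A ≤ y < -Q_A; (y - Q₂, 0] if -Q_A ≤ y < -Q₂; (y - Q₂, y + Q₂) if -Q₂ ≤ y < 0; (y - Q_B, y + Q₂) if 0 ≤ y < Q_B; (0, y + Q₂) if Q_B ≤ y < Q₂; and (y - Q₂, y + Q₂) if y ≥ Q₂. Then for every θ ∈ ℝ and every random variable Y with CDF y ↦ F(y - θ), the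 coverage satisfies P(θ ∈ I_pp(Y)) ≥ 1 - α. -/
open MeasureTheory

/-- The positive-preferring confidence interval, given the quantiles
`Q2 = q(α/2)`, `QB = q(β₋)`, `QA = q(α - β₋)`. -/
noncomputable def ppCI (Q2 QB QA : ℝ) (y : ℝ) : Set ℝ :=
  if y < -Q2 - QA then Set.Ioo (y - Q2) (y + Q2)
  else if y < -QA then Set.Ioo (y - Q2) (y + QA)
  else if y < -Q2 then Set.Ioc (y - Q2) 0
  else if y < 0 then Set.Ioo (y - Q2) (y + Q2)
  else if y < QB then Set.Ioo (y - QB) (y + Q2)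
  else if y < Q2 then Set.Ioo 0 (y + Q2)
  else Set.Ioo (y - Q2) (y + Q2)

/-- Key CDF lower bound: if `T` contains enough, then the outer measure of
`{Y < b} \ T` is at least `F (b - θ) - m` whenever `(μ T).toReal ≤ m`. -/
lemma cdf_diff_lb {Ω : Type*} [MeasurableSpace Ω] (μ : Measure Ω) [IsProbabilityMeasure μ]
    (F : ℝ → ℝ) (hFcont : Continuous F) (θ : ℝ) (Y : Ω → ℝ)
    (hY : ∀ y, (μ {ω | Y ω ≤ y}).toReal = F (y - θ))
    (T : Set Ω) (m : ℝ) (hm : (μ T).toReal ≤ m) (b : ℝ) :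
    F (b - θ) - m ≤ (μ ({ω | Y ω < b} \ T)).toReal := by
  have hstep : ∀ c, c < b → F (c - θ) - m ≤ (μ ({ω | Y ω < b} \ T)).toReal := by
    intro c hc
    have hsub : {ω | Y ω ≤ c} ⊆ T ∪ ({ω | Y ω < b} \ T) := by
      intro ω hω
      by_cases hT : ω ∈ T
      · exact Or.inl hT
      · exact Or.inr ⟨lt_of_le_of_lt hω hc, hT⟩
    have h1 : μ {ω | Y ω ≤ c} ≤ μ T + μ ({ω | Y ω < b} \ T) :=
      (measure_mono hsub).trans (measure_union_le _ _)
    have h2 := ENNReal.toReal_mono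
      (ENNReal.add_ne_top.mpr ⟨measure_ne_top μ _, measure_ne_top μ _⟩) h1
    rw [ENNReal.toReal_add (measure_ne_top μ _) (measure_ne_top μ _), hY c] at h2
    linarith
  have hlim : Filter.Tendsto (fun c : ℝ => F (c - θ) - m)
      (nhdsWithin b (Set.Iio b)) (nhds (F (b - θ) - m)) := by
    apply Filter.Tendsto.mono_left _ nhdsWithin_le_nhds
    exact ((hFcont.comp (continuous_id.sub continuous_const)).sub continuous_const).tendsto b
  refine le_of_tendsto hlim ?_
  filter_upwards [self_mem_nhdsWithin] with c hc
  exact hstep c hc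

lemma ppCI_mem_main {Q2 QB QA θ y : ℝ} (hQ2pos : 0 < Q2) (hQ2QA : Q2 ≤ QA)
    (hQBQ2 : QB ≤ Q2) (hθ : θ ≤ -Q2 ∨ 0 < θ)
    (h1 : θ - Q2 < y) (h2 : y < θ + Q2) : θ ∈ ppCI Q2 QB QA y := by
  simp only [ppCI]
  rcases hθ with hθ | hθ <;> split_ifs <;> simp only [Set.mem_Ioo, Set.mem_Ioc] <;>
    exact ⟨by linarith, by linarith⟩

lemma ppCI_mem_left {Q2 QB QA θ y : ℝ} (hQ2pos : 0 < Q2) (hQ2QA : Q2 ≤ QA)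
    (hQBQ2 : QB ≤ Q2) (hθ1 : -Q2 < θ) (hθ2 : θ ≤ 0)
    (h1 : θ - QA < y) (h2 : y < θ - Q2) : θ ∈ ppCI Q2 QB QA y := by
  simp only [ppCI]
  split_ifs <;> simp only [Set.mem_Ioo, Set.mem_Ioc] <;>
    exact ⟨by linarith, by linarith⟩

lemma ppCI_mem_right {Q2 QB QA θ y : ℝ} (hQ2pos : 0 < Q2) (hQ2QA : Q2 ≤ QA)
    (hQBQ2 : QB ≤ Q2) (hθ1 : -Q2 < θ) (hθ2 : θ ≤ 0)
    (h1 : θ - Q2 < y) (h2 : y < θ + QB) : θ ∈ ppCI Q2 QB QA y := by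
  simp only [ppCI]
  split_ifs <;> simp only [Set.mem_Ioo, Set.mem_Ioc] <;>
    exact ⟨by linarith, by linarith⟩

/-- Coverage of the positive-preferring marginal confidence interval: for any `θ`
and any `Y` with CDF `y ↦ F (y - θ)`, `P(θ ∈ I_pp(Y)) ≥ 1 - α`. -/
theorem ppCI_coverage
    {Ω : Type*} [MeasurableSpace Ω] (μ : Measure Ω) [IsProbabilityMeasure μ]
    (F : ℝ → ℝ) (hFcont : Continuous F) (hFmono : StrictMono F)
    (hF0 : ∀ y, 0 < F y) (hF1 : ∀ y, F y < 1)
    (hsym : ∀ y, F (-y) = 1 - F y)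
    (α : ℝ) (hα : α ∈ Set.Ioo (0 : ℝ) 1)
    (βm : ℝ) (hβm : α / 2 ≤ βm) (hβm' : βm ≤ α) (hβm'' : 0 < α - βm)
    (Q2 QB QA : ℝ)
    (hQ2 : F Q2 = 1 - α / 2) (hQB : F QB = 1 - βm) (hQA : F QA = 1 - (α - βm))
    (θ : ℝ) (Y : Ω → ℝ)
    (hY : ∀ y, (μ {ω | Y ω ≤ y}).toReal = F (y - θ)) :
    1 - α ≤ (μ {ω | θ ∈ ppCI Q2 QB QA (Y ω)}).toReal := by
  obtain ⟨hα0, hα1⟩ := hα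
  have hF0half : F 0 = 1 / 2 := by
    have h := hsym 0
    rw [neg_zero] at h
    linarith
  have hQ2pos : 0 < Q2 := by
    have h : F 0 < F Q2 := by rw [hF0half, hQ2]; linarith
    exact hFmono.lt_iff_lt.mp h
  have hQ2QA : Q2 ≤ QA := by
    have h : F Q2 ≤ F QA := by rw [hQ2, hQA]; linarith
    exact hFmono.le_iff_le.mp h
  have hQBQ2 : QB ≤ Q2 := by
    have h : F QB ≤ F Q2 := by rw [hQB, hQ2]; linarith
    exact hFmono.le_iff_le.mp h
  have hFnQ2 : F (-Q2) = α / 2 := by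
    have h := hsym Q2; rw [hQ2] at h; linarith
  have hFnQA : F (-QA) = α - βm := by
    have h := hsym QA; rw [hQA] at h; linarith
  set C := {ω | θ ∈ ppCI Q2 QB QA (Y ω)} with hCdef
  have hCmono : ∀ s : Set Ω, s ⊆ C → (μ s).toReal ≤ (μ C).toReal := fun s hs =>
    ENNReal.toReal_mono (measure_ne_top μ C) (measure_mono hs)
  have key := cdf_diff_lb μ F hFcont θ Y hY
  rcases le_or_gt θ (-Q2) with hθ | hθ
  · -- θ ≤ -Q2 : use the interval (θ - Q2, θ + Q2)
    have h1 := key {ω | Y ω ≤ θ - Q2} (F (θ - Q2 - θ)) (le_of_eq (hY _)) (θ + Q2)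
    have hset : ({ω | Y ω < θ + Q2} \ {ω | Y ω ≤ θ - Q2}) ⊆ C := by
      rintro ω ⟨ha, hb⟩
      simp only [Set.mem_setOf_eq, not_le] at ha hb
      exact ppCI_mem_main hQ2pos hQ2QA hQBQ2 (Or.inl hθ) hb ha
    have hmono := hCmono _ hset
    rw [show θ + Q2 - θ = Q2 by ring, show θ - Q2 - θ = -Q2 by ring, hQ2, hFnQ2] at h1
    linarith
  · rcases le_or_gt θ 0 with hθ0 | hθ0
    · -- -Q2 < θ ≤ 0
      rcases le_or_gt QB (-Q2) with hQBn | hQBn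
      · -- QB ≤ -Q2 : the left piece (θ - QA, θ - Q2) alone suffices
        have hFQB : F QB ≤ F (-Q2) := hFmono.monotone hQBn
        rw [hQB, hFnQ2] at hFQB
        have h1 := key {ω | Y ω ≤ θ - QA} (F (θ - QA - θ)) (le_of_eq (hY _)) (θ - Q2)
        have hset : ({ω | Y ω < θ - Q2} \ {ω | Y ω ≤ θ - QA}) ⊆ C := by
          rintro ω ⟨ha, hb⟩
          simp only [Set.mem_setOf_eq, not_le] at ha hb
          exact ppCI_mem_left hQ2pos hQ2QA hQBQ2 hθ hθ0 hb ha
        have hmono := hCmono _ hset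
        rw [show θ - Q2 - θ = -Q2 by ring, show θ - QA - θ = -QA by ring, hFnQ2, hFnQA] at h1
        linarith
      · -- -Q2 < QB : two pieces separated by a measurable hull of {Y ≤ θ - Q2}
        obtain ⟨T, hTmeas, hTsub, hTval0⟩ :
            ∃ T : Set Ω, MeasurableSet T ∧ {ω | Y ω ≤ θ - Q2} ⊆ T ∧
              μ T = μ {ω | Y ω ≤ θ - Q2} :=
          ⟨toMeasurable μ _, measurableSet_toMeasurable μ _, subset_toMeasurable μ _,
            measure_toMeasurable _⟩
        have hTval : (μ T).toReal = α / 2 := by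
          rw [hTval0, hY, show θ - Q2 - θ = -Q2 by ring, hFnQ2]
        -- left piece (θ - QA, θ - Q2)
        have h1 := key {ω | Y ω ≤ θ - QA} (F (θ - QA - θ)) (le_of_eq (hY _)) (θ - Q2)
        rw [show θ - Q2 - θ = -Q2 by ring, show θ - QA - θ = -QA by ring, hFnQ2, hFnQA] at h1
        -- right piece (θ - Q2, θ + QB), off T
        have h2 := key T (α / 2) (le_of_eq hTval) (θ + QB)
        rw [show θ + QB - θ = QB by ring, hQB] at h2
        have hG1 : ({ω | Y ω < θ - Q2} \ {ω | Y ω ≤ θ - QA}) ⊆ C ∩ T := by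
          rintro ω ⟨ha, hb⟩
          simp only [Set.mem_setOf_eq, not_le] at ha hb
          exact ⟨ppCI_mem_left hQ2pos hQ2QA hQBQ2 hθ hθ0 hb ha, hTsub (le_of_lt ha)⟩
        have hG2 : ({ω | Y ω < θ + QB} \ T) ⊆ C \ T := by
          rintro ω ⟨ha, hb⟩
          simp only [Set.mem_setOf_eq] at ha
          have hb' : θ - Q2 < Y ω := by
            by_contra h
            exact hb (hTsub (not_lt.mp h))
          exact ⟨ppCI_mem_right hQ2pos hQ2QA hQBQ2 hθ hθ0 hb' ha, hb⟩
        have hm1 : (μ ({ω | Y ω < θ - Q2} \ {ω | Y ω ≤ θ - QA})).toReal ≤ (μ (C ∩ T)).toReal :=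
          ENNReal.toReal_mono (measure_ne_top μ _) (measure_mono hG1)
        have hm2 : (μ ({ω | Y ω < θ + QB} \ T)).toReal ≤ (μ (C \ T)).toReal :=
          ENNReal.toReal_mono (measure_ne_top μ _) (measure_mono hG2)
        have hsplit : (μ (C ∩ T)).toReal + (μ (C \ T)).toReal = (μ C).toReal := by
          rw [← ENNReal.toReal_add (measure_ne_top μ _) (measure_ne_top μ _),
            measure_inter_add_diff C hTmeas]
        linarith
    · -- 0 < θ : use the interval (θ - Q2, θ + Q2)
      have h1 := key {ω | Y ω ≤ θ - Q2} (F (θ - Q2 - θ)) (le_of_eq (hY _)) (θ + Q2)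
      have hset : ({ω | Y ω < θ + Q2} \ {ω | Y ω ≤ θ - Q2}) ⊆ C := by
        rintro ω ⟨ha, hb⟩
        simp only [Set.mem_setOf_eq, not_le] at ha hb
        exact ppCI_mem_main hQ2pos hQ2QA hQBQ2 (Or.inr hθ0) hb ha
      have hmono := hCmono _ hset
      rw [show θ + Q2 - θ = Q2 by ring, show θ - Q2 - θ = -Q2 by ring, hQ2, hFnQ2] at h1
      linarith
end
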